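/- Under the stated assumptions, the energy functional I is bounded from below on S: there exists c ∈ ℝ such that I(u,v) ≥ c for all (u,v) ∈ S. -/

import Mathlib

open MeasureTheory ENNReal Filter

/-- The modular `ρ_λ(u) = ∬_{ℝ^{2N}} |u(x) − u(y)|^{p(x,y)} /
(λ^{p(x,y)} |x − y|^{N + p(x,y)s(x,y)}) dx dy`, as a value in `[0,∞]`. -/
noncomputable def fracModular (N : ℕ)
    (p s : EuclideanSpace ℝ (Fin N) × EuclideanSpace ℝ (Fin N) → ℝ)
    (lam : ℝ) (u : EuclideanSpace ℝ (Fin N) → ℝ) : ℝ≥0∞ :=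
  ∫⁻ z : EuclideanSpace ℝ (Fin N) × EuclideanSpace ℝ (Fin N),
    ENNReal.ofReal
      (|u z.1 - u z.2| ^ p z / (lam ^ p z * ‖z.1 - z.2‖ ^ ((N : ℝ) + p z * s z)))

/-- The Gagliardo–Luxemburg norm `‖u‖_{X₀} = inf { λ > 0 : ρ_λ(u) ≤ 1 }`. -/
noncomputable def fracNorm (N : ℕ)
    (p s : EuclideanSpace ℝ (Fin N) × EuclideanSpace ℝ (Fin N) → ℝ)
    (u : EuclideanSpace ℝ (Fin N) → ℝ) : ℝ :=
  sInf {lam : ℝ | 0 < lam ∧ fracModular N p s lam u ≤ 1}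

/-- `δ(u) = ∬_{ℝ^{2N}} (1/p(x,y)) |u(x) − u(y)|^{p(x,y)} / |x − y|^{N + p(x,y)s(x,y)} dx dy`. -/
noncomputable def deltaModular (N : ℕ)
    (p s : EuclideanSpace ℝ (Fin N) × EuclideanSpace ℝ (Fin N) → ℝ)
    (u : EuclideanSpace ℝ (Fin N) → ℝ) : ℝ≥0∞ :=
  ∫⁻ z : EuclideanSpace ℝ (Fin N) × EuclideanSpace ℝ (Fin N),
    ENNReal.ofReal
      (1 / p z * (|u z.1 - u z.2| ^ p z / ‖z.1 - z.2‖ ^ ((N : ℝ) + p z * s z)))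

/-- The Luxemburg norm `‖w‖_{r(·)} = inf { λ > 0 : ∫_Ω |w(x)/λ|^{r(x)} dx ≤ 1 }` on `Ω`. -/
noncomputable def luxNorm {N : ℕ} (Ω : Set (EuclideanSpace ℝ (Fin N)))
    (r : EuclideanSpace ℝ (Fin N) → ℝ) (w : EuclideanSpace ℝ (Fin N) → ℝ) : ℝ :=
  sInf {lam : ℝ | 0 < lam ∧ ∫⁻ x in Ω, ENNReal.ofReal (|w x / lam| ^ r x) ≤ 1}

/-- Membership in `X₀`: measurable, vanishing a.e. outside `Ω`, with finite norm
(i.e. some `λ > 0` is admissible in the Luxemburg infimum). -/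
def memX0 (N : ℕ)
    (p s : EuclideanSpace ℝ (Fin N) × EuclideanSpace ℝ (Fin N) → ℝ)
    (Ω : Set (EuclideanSpace ℝ (Fin N))) (u : EuclideanSpace ℝ (Fin N) → ℝ) : Prop :=
  Measurable u ∧ (∀ᵐ x : EuclideanSpace ℝ (Fin N), x ∉ Ω → u x = 0) ∧
    ∃ lam > (0 : ℝ), fracModular N p s lam u ≤ 1

/-- The energy functional
`I(u,v) = M̃₁(δ(u)) + M̃₂(δ(v)) − ∫_Ω H(u,v) − ∫_Ω a u − ∫_Ω b v`,
where `M̃ᵢ(t) = ∫_0^t Mᵢ(τ) dτ`. -/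
noncomputable def energy (N : ℕ)
    (p s : EuclideanSpace ℝ (Fin N) × EuclideanSpace ℝ (Fin N) → ℝ)
    (Ω : Set (EuclideanSpace ℝ (Fin N))) (M₁ M₂ : ℝ → ℝ) (H : ℝ → ℝ → ℝ)
    (a b : EuclideanSpace ℝ (Fin N) → ℝ) (u v : EuclideanSpace ℝ (Fin N) → ℝ) : ℝ :=
  (∫ τ in Set.Ioo (0 : ℝ) ((deltaModular N p s u).toReal), M₁ τ) +
    (∫ τ in Set.Ioo (0 : ℝ) ((deltaModular N p s v).toReal), M₂ τ) -
    (∫ x in Ω, H (u x) (v x)) - (∫ x in Ω, a x * u x) - ∫ x in Ω, b x * v x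

/-!
Write `pm = inf p`, `pM = sup p`. Comparing the integrands of `ρ_λ` and `δ` gives
`‖u‖_{X₀} ≤ max 1 (pM δ(u))^{1/pm}`, so by the embedding and Young's inequality
`|∫ a u| ≤ K₀ + K₁ δ(u)^{1/pm}`. The hypothesis on `Mᵢ` gives `M̃ᵢ(t) ≥ (m/γ) t^γ`, and
`γ > 1/pm` makes `(m/γ) t^γ − K₁ t^{1/pm}` bounded below on `[0, ∞)`. The term with `H` is
bounded by `sup |H| · |Ω|`.
-/

lemma exists_le_mul_rpow_sub_mul_rpow {m A β γ : ℝ} (hm : 0 < m) (hA : 0 ≤ A) (hβ : 0 ≤ β)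
    (hβγ : β < γ) : ∃ c, ∀ t, 0 ≤ t → c ≤ m * t ^ γ - A * t ^ β := by
  set T := (A / m) ^ (γ - β)⁻¹
  have hT : 0 ≤ T := by positivity
  refine ⟨-(A * T ^ β), fun t ht => ?_⟩
  rcases le_total t T with htT | hTt
  · have : A * t ^ β ≤ A * T ^ β := by gcongr
    have : 0 ≤ m * t ^ γ := by positivity
    linarith
  · have hAm : A / m ≤ t ^ (γ - β) :=
      (Real.rpow_inv_le_iff_of_pos (by positivity) ht (by linarith)).mp hTt
    have : A * t ^ β ≤ m * t ^ γ :=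
      calc A * t ^ β = A / m * m * t ^ β := by field_simp
        _ ≤ t ^ (γ - β) * m * t ^ β := by gcongr
        _ = m * t ^ γ := by
          rw [mul_comm _ m, mul_assoc, ← Real.rpow_add' ht (by linarith), sub_add_cancel]
    have : 0 ≤ A * T ^ β := by positivity
    linarith

lemma mul_rpow_le_setIntegral_Ioo {M : ℝ → ℝ} {m γ t : ℝ} (hγ : 0 < γ) (ht : 0 ≤ t)
    (hM : IntegrableOn M (Set.Ioo 0 t)) (hlow : ∀ τ ∈ Set.Ioo 0 t, m * τ ^ (γ - 1) ≤ M τ) :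
    m / γ * t ^ γ ≤ ∫ τ in Set.Ioo 0 t, M τ := by
  have hpow : IntegrableOn (fun τ : ℝ => m * τ ^ (γ - 1)) (Set.Ioo 0 t) :=
    (((intervalIntegral.intervalIntegrable_rpow' (by linarith)).1).mono_set
      Set.Ioo_subset_Ioc_self).const_mul m
  calc m / γ * t ^ γ = ∫ τ in Set.Ioo 0 t, m * τ ^ (γ - 1) := by
        rw [integral_const_mul, ← integral_Ioc_eq_integral_Ioo,
          ← intervalIntegral.integral_of_le ht, integral_rpow (Or.inl (by linarith)),
          sub_add_cancel, Real.zero_rpow hγ.ne']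
        ring
    _ ≤ ∫ τ in Set.Ioo 0 t, M τ := setIntegral_mono_on hpow hM measurableSet_Ioo hlow

lemma abs_min_abs_sub_min_abs_le (a b n : ℝ) : |min |a| n - min |b| n| ≤ |a - b| :=
  calc |min |a| n - min |b| n| ≤ max |(|a| - |b|)| |n - n| := abs_min_sub_min_le_max _ _ _ _
    _ = |(|a| - |b|)| := by simp
    _ ≤ |a - b| := abs_abs_sub_abs_le_abs_sub a b

section Modular

variable {α : Type*} [MeasurableSpace α] {μ : Measure α} {s : Set α} {r : α → ℝ}

lemma lintegral_ofReal_le_ofReal_mul {f g : α → ℝ} {c : ℝ} (hc : 0 ≤ c)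
    (hfg : ∀ x, f x ≤ c * g x) :
    ∫⁻ x, ENNReal.ofReal (f x) ∂μ ≤ ENNReal.ofReal c * ∫⁻ x, ENNReal.ofReal (g x) ∂μ := by
  rw [← lintegral_const_mul' _ _ ofReal_ne_top]
  exact lintegral_mono fun x => (ofReal_le_ofReal (hfg x)).trans_eq (ofReal_mul hc)

lemma abs_setIntegral_mul_le_of_lintegral_rpow_le_one (hs : MeasurableSet s) {r' : α → ℝ}
    (hr : Measurable r) (hrr' : ∀ x ∈ s, (r x).HolderConjugate (r' x)) {f g : α → ℝ}
    (hf : Measurable f) {lf lg : ℝ} (hlf : 0 < lf) (hlg : 0 < lg)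
    (hfmod : ∫⁻ x in s, ENNReal.ofReal (|f x / lf| ^ r x) ∂μ ≤ 1)
    (hgmod : ∫⁻ x in s, ENNReal.ofReal (|g x / lg| ^ r' x) ∂μ ≤ 1) :
    |∫ x in s, g x * f x ∂μ| ≤ 2 * (lg * lf) := by
  have hpt : ∀ x ∈ s, ENNReal.ofReal |g x * f x| ≤ ENNReal.ofReal (lg * lf) *
      (ENNReal.ofReal (|f x / lf| ^ r x) + ENNReal.ofReal (|g x / lg| ^ r' x)) := by
    intro x hx
    have hc := hrr' x hx
    have hyoung : |f x / lf| * |g x / lg| ≤ |f x / lf| ^ r x + |g x / lg| ^ r' x :=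
      (Real.young_inequality_of_nonneg (abs_nonneg _) (abs_nonneg _) hc).trans
        (add_le_add (div_le_self (by positivity) hc.lt.le)
          (div_le_self (by positivity) hc.symm.lt.le))
    have hprod : |g x * f x| = lg * lf * (|f x / lf| * |g x / lg|) := by
      rw [abs_mul, abs_div, abs_div, abs_of_pos hlf, abs_of_pos hlg]
      field_simp
    rw [← ofReal_add (by positivity) (by positivity), ← ofReal_mul (by positivity), hprod]
    exact ofReal_le_ofReal (mul_le_mul_of_nonneg_left hyoung (by positivity))
  have hlint : ∫⁻ x in s, ENNReal.ofReal |g x * f x| ∂μ ≤ ENNReal.ofReal (lg * lf) * 2 :=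
    calc ∫⁻ x in s, ENNReal.ofReal |g x * f x| ∂μ
        ≤ ∫⁻ x in s, ENNReal.ofReal (lg * lf) *
            (ENNReal.ofReal (|f x / lf| ^ r x) + ENNReal.ofReal (|g x / lg| ^ r' x)) ∂μ :=
          setLIntegral_mono' hs hpt
      _ = ENNReal.ofReal (lg * lf) * ((∫⁻ x in s, ENNReal.ofReal (|f x / lf| ^ r x) ∂μ) +
            ∫⁻ x in s, ENNReal.ofReal (|g x / lg| ^ r' x) ∂μ) := by
          rw [lintegral_const_mul' _ _ ofReal_ne_top,
            lintegral_add_left ((hf.div_const lf).abs.pow hr).ennreal_ofReal]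
      _ ≤ ENNReal.ofReal (lg * lf) * (1 + 1) := by gcongr
      _ = ENNReal.ofReal (lg * lf) * 2 := by norm_num
  calc |∫ x in s, g x * f x ∂μ|
      ≤ (∫⁻ x in s, ENNReal.ofReal |g x * f x| ∂μ).toReal := by
        simpa only [Real.norm_eq_abs] using
          norm_integral_le_lintegral_norm (μ := μ.restrict s) fun x => g x * f x
    _ ≤ (ENNReal.ofReal (lg * lf) * 2).toReal := toReal_mono (by finiteness) hlint
    _ = 2 * (lg * lf) := by
        rw [toReal_mul, toReal_ofReal (by positivity)]
        norm_num [mul_comm]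

lemma exists_lintegral_rpow_div_le_one_of_abs_le (hs : μ s ≠ ⊤) {r₀ : ℝ} (hr₀ : 0 < r₀)
    (hr : ∀ x, r₀ ≤ r x) {w : α → ℝ} {K : ℝ} (hw : ∀ x, |w x| ≤ K) :
    ∃ l > 0, ∫⁻ x in s, ENNReal.ofReal (|w x / l| ^ r x) ∂μ ≤ 1 := by
  set V := max (μ s).toReal 1
  have hV : 1 ≤ V := le_max_right _ _
  have hV0 : 0 < V := by linarith
  have hb : 1 ≤ V ^ r₀⁻¹ := Real.one_le_rpow hV (by positivity)
  refine ⟨(|K| + 1) * V ^ r₀⁻¹, by positivity, ?_⟩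
  have hpt : ∀ x, |w x / ((|K| + 1) * V ^ r₀⁻¹)| ^ r x ≤ V⁻¹ := by
    intro x
    have hwx : |w x / ((|K| + 1) * V ^ r₀⁻¹)| ≤ (V ^ r₀⁻¹)⁻¹ := by
      have hl : 0 < (|K| + 1) * V ^ r₀⁻¹ := by positivity
      rw [abs_div, abs_of_pos hl, div_le_iff₀ hl, mul_comm (|K| + 1), ← mul_assoc,
        inv_mul_cancel₀ (by positivity), one_mul]
      linarith [hw x, le_abs_self K]
    calc |w x / ((|K| + 1) * V ^ r₀⁻¹)| ^ r x ≤ ((V ^ r₀⁻¹)⁻¹) ^ r x := by gcongr; linarith [hr x]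
      _ ≤ ((V ^ r₀⁻¹)⁻¹) ^ r₀ :=
        Real.rpow_le_rpow_of_exponent_ge (by positivity) (inv_le_one_of_one_le₀ hb) (hr x)
      _ = V⁻¹ := by
        rw [Real.inv_rpow (by positivity), Real.rpow_inv_rpow (by positivity) hr₀.ne']
  calc ∫⁻ x in s, ENNReal.ofReal (|w x / ((|K| + 1) * V ^ r₀⁻¹)| ^ r x) ∂μ
      ≤ ∫⁻ _ in s, ENNReal.ofReal V⁻¹ ∂μ := lintegral_mono fun x => ofReal_le_ofReal (hpt x)
    _ = ENNReal.ofReal V⁻¹ * μ s := setLIntegral_const _ _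
    _ ≤ ENNReal.ofReal V⁻¹ * ENNReal.ofReal V := by
        rw [← ofReal_toReal hs]
        gcongr
        exact le_max_left _ _
    _ = 1 := by rw [← ofReal_mul (by positivity), inv_mul_cancel₀ (by positivity), ofReal_one]

lemma lintegral_rpow_div_le_one_of_forall_min_abs {u : α → ℝ} (hu : Measurable u)
    (hr : Measurable r) (hr0 : ∀ x, 0 ≤ r x) {l : ℝ} (hl : 0 < l)
    (h : ∀ n : ℕ, ∫⁻ x, ENNReal.ofReal (|min |u x| n / l| ^ r x) ∂μ ≤ 1) :
    ∫⁻ x, ENNReal.ofReal (|u x / l| ^ r x) ∂μ ≤ 1 := by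
  have habs : ∀ (n : ℕ) x, |min |u x| n / l| = min |u x| n / l := fun n x =>
    abs_of_nonneg (div_nonneg (le_min (abs_nonneg _) n.cast_nonneg) hl.le)
  have hmono : Monotone fun (n : ℕ) x => ENNReal.ofReal (|min |u x| n / l| ^ r x) := by
    intro n k hnk x
    refine ofReal_le_ofReal (Real.rpow_le_rpow (abs_nonneg _) ?_ (hr0 x))
    rw [habs, habs]
    gcongr
  have hsup : ∀ x, ⨆ n : ℕ, ENNReal.ofReal (|min |u x| n / l| ^ r x)
      = ENNReal.ofReal (|u x / l| ^ r x) := by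
    intro x
    have hceil : min |u x| ⌈|u x|⌉₊ = |u x| := min_eq_left (Nat.le_ceil _)
    refine le_antisymm (iSup_le fun n => ?_) (le_iSup_of_le ⌈|u x|⌉₊ ?_)
    · refine ofReal_le_ofReal (Real.rpow_le_rpow (abs_nonneg _) ?_ (hr0 x))
      rw [habs, abs_div, abs_of_pos hl]
      gcongr
      exact min_le_left _ _
    · rw [hceil, abs_div, abs_div, abs_abs]
  calc ∫⁻ x, ENNReal.ofReal (|u x / l| ^ r x) ∂μ
      = ∫⁻ x, ⨆ n : ℕ, ENNReal.ofReal (|min |u x| n / l| ^ r x) ∂μ :=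
        lintegral_congr fun x => (hsup x).symm
    _ = ⨆ n : ℕ, ∫⁻ x, ENNReal.ofReal (|min |u x| n / l| ^ r x) ∂μ :=
        lintegral_iSup (fun n => (((hu.abs.min measurable_const).div_const l).abs.pow
          hr).ennreal_ofReal) hmono
    _ ≤ 1 := iSup_le h

end Modular

lemma lintegral_rpow_div_le_one_of_luxNorm_lt {N : ℕ} {Ω : Set (EuclideanSpace ℝ (Fin N))}
    {r w : EuclideanSpace ℝ (Fin N) → ℝ} (hr : ∀ x, 0 ≤ r x)
    (hw : ∃ l > 0, ∫⁻ x in Ω, ENNReal.ofReal (|w x / l| ^ r x) ≤ 1) {lam : ℝ}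
    (hlam : luxNorm Ω r w < lam) : ∫⁻ x in Ω, ENNReal.ofReal (|w x / lam| ^ r x) ≤ 1 := by
  obtain ⟨l, hl0, hl⟩ := hw
  obtain ⟨l', ⟨hl'0, hl'⟩, hl'lam⟩ := exists_lt_of_csInf_lt (s := {l : ℝ | 0 < l ∧
    ∫⁻ x in Ω, ENNReal.ofReal (|w x / l| ^ r x) ≤ 1}) ⟨l, hl0, hl⟩ hlam
  refine le_trans (lintegral_mono fun x => ofReal_le_ofReal ?_) hl'
  refine Real.rpow_le_rpow (abs_nonneg _) ?_ (hr x)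
  rw [abs_div, abs_div, abs_of_pos hl'0, abs_of_pos (hl'0.trans hl'lam)]
  gcongr

section Fractional

variable {N : ℕ} {p s : EuclideanSpace ℝ (Fin N) × EuclideanSpace ℝ (Fin N) → ℝ}
  {u : EuclideanSpace ℝ (Fin N) → ℝ} {pm pM : ℝ}

noncomputable def gagliardoIntegrand (N : ℕ)
    (p s : EuclideanSpace ℝ (Fin N) × EuclideanSpace ℝ (Fin N) → ℝ)
    (u : EuclideanSpace ℝ (Fin N) → ℝ)
    (z : EuclideanSpace ℝ (Fin N) × EuclideanSpace ℝ (Fin N)) : ℝ :=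
  |u z.1 - u z.2| ^ p z / ‖z.1 - z.2‖ ^ ((N : ℝ) + p z * s z)

lemma gagliardoIntegrand_nonneg (z : EuclideanSpace ℝ (Fin N) × EuclideanSpace ℝ (Fin N)) :
    0 ≤ gagliardoIntegrand N p s u z := by
  unfold gagliardoIntegrand
  positivity

lemma fracModular_eq_lintegral (l : ℝ) : fracModular N p s l u =
    ∫⁻ z, ENNReal.ofReal (gagliardoIntegrand N p s u z / l ^ p z) :=
  lintegral_congr fun z => by rw [gagliardoIntegrand, div_mul_eq_div_div_swap]

lemma fracModular_one_eq_lintegral :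
    fracModular N p s 1 u = ∫⁻ z, ENNReal.ofReal (gagliardoIntegrand N p s u z) := by
  simp only [fracModular_eq_lintegral, Real.one_rpow, div_one]

lemma deltaModular_eq_lintegral : deltaModular N p s u =
    ∫⁻ z, ENNReal.ofReal (1 / p z * gagliardoIntegrand N p s u z) := rfl

lemma fracModular_le_of_abs_sub_le (hp : ∀ z, 0 ≤ p z) {w : EuclideanSpace ℝ (Fin N) → ℝ}
    (hw : ∀ x y, |w x - w y| ≤ |u x - u y|) {l : ℝ} (hl : 0 ≤ l) :
    fracModular N p s l w ≤ fracModular N p s l u :=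
  lintegral_mono fun z => ofReal_le_ofReal <|
    div_le_div_of_nonneg_right (Real.rpow_le_rpow (abs_nonneg _) (hw z.1 z.2) (hp z))
      (by positivity)

lemma fracModular_anti (hp : ∀ z, 0 ≤ p z) {l l' : ℝ} (hl : 0 < l) (hll' : l ≤ l') :
    fracModular N p s l' u ≤ fracModular N p s l u := by
  simp only [fracModular_eq_lintegral]
  exact lintegral_mono fun z => ofReal_le_ofReal <|
    div_le_div_of_nonneg_left (gagliardoIntegrand_nonneg z) (by positivity)
      (Real.rpow_le_rpow hl.le hll' (hp z))

lemma fracModular_one_le_rpow_mul (hpM : ∀ z, p z ≤ pM) {l : ℝ} (hl : 1 ≤ l) :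
    fracModular N p s 1 u ≤ ENNReal.ofReal (l ^ pM) * fracModular N p s l u := by
  rw [fracModular_one_eq_lintegral, fracModular_eq_lintegral]
  refine lintegral_ofReal_le_ofReal_mul (by positivity) fun z => ?_
  have hlz : 0 < l ^ p z := by positivity
  calc gagliardoIntegrand N p s u z = l ^ p z * (gagliardoIntegrand N p s u z / l ^ p z) := by
        field_simp
    _ ≤ l ^ pM * (gagliardoIntegrand N p s u z / l ^ p z) := by
        gcongr
        · exact div_nonneg (gagliardoIntegrand_nonneg z) hlz.le
        · exact hpM z

lemma fracModular_le_rpow_inv_mul (hpm : ∀ z, pm ≤ p z) {l : ℝ} (hl : 1 ≤ l) :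
    fracModular N p s l u ≤ ENNReal.ofReal (l ^ pm)⁻¹ * fracModular N p s 1 u := by
  rw [fracModular_one_eq_lintegral, fracModular_eq_lintegral]
  refine lintegral_ofReal_le_ofReal_mul (by positivity) fun z => ?_
  rw [← div_eq_inv_mul]
  exact div_le_div_of_nonneg_left (gagliardoIntegrand_nonneg z) (by positivity)
    (Real.rpow_le_rpow_of_exponent_le hl (hpm z))

lemma deltaModular_le_inv_mul_fracModular_one (hpm0 : 0 < pm) (hpm : ∀ z, pm ≤ p z) :
    deltaModular N p s u ≤ ENNReal.ofReal pm⁻¹ * fracModular N p s 1 u := by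
  rw [fracModular_one_eq_lintegral, deltaModular_eq_lintegral]
  refine lintegral_ofReal_le_ofReal_mul (by positivity) fun z => ?_
  rw [one_div]
  gcongr
  · exact gagliardoIntegrand_nonneg z
  · exact hpm z

lemma fracModular_one_le_mul_deltaModular (hp : ∀ z, 0 < p z) (hpM : ∀ z, p z ≤ pM) :
    fracModular N p s 1 u ≤ ENNReal.ofReal pM * deltaModular N p s u := by
  rw [fracModular_one_eq_lintegral, deltaModular_eq_lintegral]
  refine lintegral_ofReal_le_ofReal_mul ((hp 0).le.trans (hpM 0)) fun z => ?_
  have hpz := hp z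
  calc gagliardoIntegrand N p s u z = p z * (1 / p z * gagliardoIntegrand N p s u z) := by
        field_simp
    _ ≤ pM * (1 / p z * gagliardoIntegrand N p s u z) := by
        gcongr
        · exact mul_nonneg (by positivity) (gagliardoIntegrand_nonneg z)
        · exact hpM z

lemma deltaModular_ne_top (hpm0 : 0 < pm) (hpm : ∀ z, pm ≤ p z) (hpM : ∀ z, p z ≤ pM)
    (hu : ∃ l > 0, fracModular N p s l u ≤ 1) : deltaModular N p s u ≠ ⊤ := by
  obtain ⟨l, hl0, hl⟩ := hu
  have hp : ∀ z, 0 ≤ p z := fun z => hpm0.le.trans (hpm z)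
  have hρ₁ : fracModular N p s 1 u ≤ ENNReal.ofReal (max l 1 ^ pM) :=
    calc fracModular N p s 1 u ≤ ENNReal.ofReal (max l 1 ^ pM) * fracModular N p s (max l 1) u :=
          fracModular_one_le_rpow_mul hpM (le_max_right _ _)
      _ ≤ ENNReal.ofReal (max l 1 ^ pM) * 1 := by
          gcongr
          exact (fracModular_anti hp hl0 (le_max_left _ _)).trans hl
      _ = ENNReal.ofReal (max l 1 ^ pM) := mul_one _
  refine ne_top_of_le_ne_top ?_ (deltaModular_le_inv_mul_fracModular_one hpm0 hpm)
  exact mul_ne_top ofReal_ne_top (ne_top_of_le_ne_top ofReal_ne_top hρ₁)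

lemma fracNorm_le_max_rpow_deltaModular (hpm0 : 0 < pm) (hpm : ∀ z, pm ≤ p z)
    (hpM : ∀ z, p z ≤ pM) (hδ : deltaModular N p s u ≠ ⊤) :
    fracNorm N p s u ≤ max 1 ((pM * (deltaModular N p s u).toReal) ^ pm⁻¹) := by
  set Λ := max 1 ((pM * (deltaModular N p s u).toReal) ^ pm⁻¹)
  have hΛ : 1 ≤ Λ := le_max_left _ _
  have hpM0 : 0 ≤ pM := hpm0.le.trans ((hpm 0).trans (hpM 0))
  have hδΛ : pM * (deltaModular N p s u).toReal ≤ Λ ^ pm :=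
    (Real.rpow_inv_le_iff_of_pos (by positivity) (by positivity) hpm0).mp (le_max_right _ _)
  have hmod : fracModular N p s Λ u ≤ 1 :=
    calc fracModular N p s Λ u
        ≤ ENNReal.ofReal (Λ ^ pm)⁻¹ * (ENNReal.ofReal pM * deltaModular N p s u) :=
          (fracModular_le_rpow_inv_mul hpm hΛ).trans <| by
            gcongr
            exact fracModular_one_le_mul_deltaModular (fun z => hpm0.trans_le (hpm z)) hpM
      _ = ENNReal.ofReal ((Λ ^ pm)⁻¹ * (pM * (deltaModular N p s u).toReal)) := by
          rw [ofReal_mul (by positivity), ofReal_mul hpM0, ofReal_toReal hδ]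
      _ ≤ 1 := by
          rw [← ofReal_one]
          refine ofReal_le_ofReal ?_
          rw [inv_mul_le_iff₀ (by positivity), mul_one]
          exact hδΛ
  exact csInf_le ⟨0, fun _ hl => hl.1.le⟩ ⟨by positivity, hmod⟩

lemma fracNorm_le_of_abs_sub_le (hp : ∀ z, 0 ≤ p z) (hu : ∃ l > 0, fracModular N p s l u ≤ 1)
    {w : EuclideanSpace ℝ (Fin N) → ℝ} (hw : ∀ x y, |w x - w y| ≤ |u x - u y|) :
    fracNorm N p s w ≤ fracNorm N p s u := by
  obtain ⟨l, hl0, hl⟩ := hu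
  refine csInf_le_csInf ⟨0, fun _ hl => hl.1.le⟩ ⟨l, hl0, hl⟩ ?_
  rintro l ⟨hl0, hl⟩
  exact ⟨hl0, (fracModular_le_of_abs_sub_le hp hw hl0.le).trans hl⟩

lemma memX0.min_abs {Ω : Set (EuclideanSpace ℝ (Fin N))} (hp : ∀ z, 0 ≤ p z)
    (hu : memX0 N p s Ω u) {n : ℝ} (hn : 0 ≤ n) : memX0 N p s Ω fun x => min |u x| n := by
  obtain ⟨hmeas, hvan, l, hl0, hl⟩ := hu
  refine ⟨hmeas.abs.min measurable_const, hvan.mono fun x hx hxΩ => ?_, l, hl0,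
    (fracModular_le_of_abs_sub_le hp (fun x y => abs_min_abs_sub_min_abs_le _ _ _) hl0.le).trans hl⟩
  simp [hx hxΩ, hn]

end Fractional

section Energy

variable {N : ℕ} {Ω : Set (EuclideanSpace ℝ (Fin N))}
  {p s : EuclideanSpace ℝ (Fin N) × EuclideanSpace ℝ (Fin N) → ℝ} {pm pM C : ℝ}

/-- Since `luxNorm` is `0` when no `λ` is admissible, the embedding is applied to the bounded
truncations `min |u| n`, for which some `λ` is admissible, and monotone convergence passes to
`u`. -/
lemma lintegral_rpow_div_le_one_of_memX0 (hΩ : volume Ω ≠ ⊤) (hpm0 : 0 < pm)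
    (hpm : ∀ z, pm ≤ p z) (hpd : Measurable fun x => p (x, x)) (hC : 0 ≤ C)
    (hembed : ∀ w, memX0 N p s Ω w → luxNorm Ω (fun x => p (x, x)) w ≤ C * fracNorm N p s w)
    {u : EuclideanSpace ℝ (Fin N) → ℝ} (hu : memX0 N p s Ω u) {lam : ℝ}
    (hlam : C * fracNorm N p s u < lam) :
    ∫⁻ x in Ω, ENNReal.ofReal (|u x / lam| ^ p (x, x)) ≤ 1 := by
  have hp : ∀ z, 0 ≤ p z := fun z => hpm0.le.trans (hpm z)
  have hlam0 : 0 < lam :=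
    (mul_nonneg hC (Real.sInf_nonneg fun _ hl => hl.1.le)).trans_lt hlam
  refine lintegral_rpow_div_le_one_of_forall_min_abs hu.1 hpd (fun x => hp _) hlam0 fun n => ?_
  have hbdd : ∀ x, |min |u x| n| ≤ n := fun x => by
    rw [abs_of_nonneg (le_min (abs_nonneg _) n.cast_nonneg)]
    exact min_le_right _ _
  refine lintegral_rpow_div_le_one_of_luxNorm_lt (fun x => hp _)
    (exists_lintegral_rpow_div_le_one_of_abs_le hΩ hpm0 (fun x => hpm _) hbdd) ?_
  calc luxNorm Ω (fun x => p (x, x)) (fun x => min |u x| n)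
      ≤ C * fracNorm N p s fun x => min |u x| n := hembed _ (hu.min_abs hp n.cast_nonneg)
    _ ≤ C * fracNorm N p s u := by
        gcongr
        exact fracNorm_le_of_abs_sub_le hp hu.2.2 fun x y => abs_min_abs_sub_min_abs_le _ _ _
    _ < lam := hlam

lemma exists_le_setIntegral_Ioo_sub_setIntegral_mul (hΩm : MeasurableSet Ω)
    (hΩ : volume Ω ≠ ⊤) (hpm1 : 1 < pm) (hpm : ∀ z, pm ≤ p z) (hpM : ∀ z, p z ≤ pM)
    (hpd : Measurable fun x => p (x, x)) (hC : 0 ≤ C)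
    (hembed : ∀ w, memX0 N p s Ω w → luxNorm Ω (fun x => p (x, x)) w ≤ C * fracNorm N p s w)
    {m γ : ℝ} (hm : 0 < m) (hγ : pm⁻¹ < γ) {M : ℝ → ℝ}
    (hMlow : ∀ t : ℝ, 0 < t → m * t ^ (γ - 1) ≤ M t)
    (hMint : ∀ t : ℝ, 0 < t → IntegrableOn M (Set.Ioo 0 t))
    {q a : EuclideanSpace ℝ (Fin N) → ℝ} (hpq : ∀ x ∈ Ω, (p (x, x)).HolderConjugate (q x))
    {la : ℝ} (hla : 0 < la) (ha : ∫⁻ x in Ω, ENNReal.ofReal (|a x / la| ^ q x) ≤ 1) :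
    ∃ c, ∀ u, memX0 N p s Ω u →
      c ≤ (∫ τ in Set.Ioo 0 (deltaModular N p s u).toReal, M τ) - ∫ x in Ω, a x * u x := by
  have hpm0 : 0 < pm := by linarith
  have hpM0 : 0 ≤ pM := hpm0.le.trans ((hpm 0).trans (hpM 0))
  have hγ0 : 0 < γ := (inv_pos.mpr hpm0).trans hγ
  set A := 2 * la * C * pM ^ pm⁻¹
  obtain ⟨c, hc⟩ := exists_le_mul_rpow_sub_mul_rpow (m := m / γ) (A := A) (by positivity)
    (by positivity) (inv_nonneg.mpr hpm0.le) hγ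
  refine ⟨c - 2 * la * (C + 1), fun u hu => ?_⟩
  have hδ := deltaModular_ne_top hpm0 hpm hpM hu.2.2
  set t := (deltaModular N p s u).toReal
  have ht : 0 ≤ t := toReal_nonneg
  have hkirchhoff : m / γ * t ^ γ ≤ ∫ τ in Set.Ioo 0 t, M τ := by
    refine mul_rpow_le_setIntegral_Ioo hγ0 ht ?_ fun τ hτ => hMlow τ hτ.1
    rcases ht.eq_or_lt with h | h
    · simp [← h]
    · exact hMint t h
  set lam := C * (1 + pM ^ pm⁻¹ * t ^ pm⁻¹) + 1
  have hnorm : C * fracNorm N p s u < lam := by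
    have hmax : max 1 ((pM * t) ^ pm⁻¹) ≤ 1 + pM ^ pm⁻¹ * t ^ pm⁻¹ := by
      rw [Real.mul_rpow hpM0 ht]
      exact max_le (le_add_of_nonneg_right (by positivity)) (le_add_of_nonneg_left zero_le_one)
    have := mul_le_mul_of_nonneg_left
      ((fracNorm_le_max_rpow_deltaModular hpm0 hpm hpM hδ).trans hmax) hC
    linarith
  have hyoung : |∫ x in Ω, a x * u x| ≤ 2 * (la * lam) :=
    abs_setIntegral_mul_le_of_lintegral_rpow_le_one hΩm hpd hpq hu.1 (by positivity) hla
      (lintegral_rpow_div_le_one_of_memX0 hΩ hpm0 hpm hpd hC hembed hu hnorm) ha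
  have hlam : 2 * (la * lam) = 2 * la * (C + 1) + A * t ^ pm⁻¹ := by ring
  linarith [hc t ht, le_abs_self (∫ x in Ω, a x * u x)]

end Energy

theorem energy_bddBelow_general (N : ℕ)
    (Ω : Set (EuclideanSpace ℝ (Fin N))) (hΩopen : IsOpen Ω)
    (hΩbdd : Bornology.IsBounded Ω)
    (p s : EuclideanSpace ℝ (Fin N) × EuclideanSpace ℝ (Fin N) → ℝ)
    (hpc : Continuous p)
    (hpinf : 1 < ⨅ z, p z) (hpbdd : BddAbove (Set.range p))
    (m γ : ℝ) (hm : 0 < m) (hγ : 1 / (⨅ z, p z) < γ)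
    (M₁ M₂ : ℝ → ℝ)
    (hM₁low : ∀ t : ℝ, 0 < t → m * t ^ (γ - 1) ≤ M₁ t)
    (hM₂low : ∀ t : ℝ, 0 < t → m * t ^ (γ - 1) ≤ M₂ t)
    (hM₁int : ∀ t : ℝ, 0 < t → IntegrableOn M₁ (Set.Ioo 0 t) volume)
    (hM₂int : ∀ t : ℝ, 0 < t → IntegrableOn M₂ (Set.Ioo 0 t) volume)
    (H : ℝ → ℝ → ℝ)
    (hHbdd : ∃ CH : ℝ, ∀ x y : ℝ, |H x y| ≤ CH)
    (q : EuclideanSpace ℝ (Fin N) → ℝ)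
    (hq : ∀ x ∈ Ω, 1 / p (x, x) + 1 / q x = 1)
    (a b : EuclideanSpace ℝ (Fin N) → ℝ)
    (hafin : ∃ lam > (0 : ℝ), ∫⁻ x in Ω, ENNReal.ofReal (|a x / lam| ^ q x) ≤ 1)
    (hbfin : ∃ lam > (0 : ℝ), ∫⁻ x in Ω, ENNReal.ofReal (|b x / lam| ^ q x) ≤ 1)
    (C : ℝ) (hC : 0 < C)
    (hembed : ∀ u, memX0 N p s Ω u →
      luxNorm Ω (fun x => p (x, x)) u ≤ C * fracNorm N p s u) :
    ∃ c : ℝ, ∀ u v : EuclideanSpace ℝ (Fin N) → ℝ,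
      memX0 N p s Ω u → memX0 N p s Ω v →
      c ≤ energy N p s Ω M₁ M₂ H a b u v := by
  have hpm : ∀ z, ⨅ z, p z ≤ p z := ciInf_le <| not_not.mp fun h => by
    rw [Real.iInf_of_not_bddBelow h] at hpinf
    linarith
  have hpM : ∀ z, p z ≤ ⨆ z, p z := le_ciSup hpbdd
  have hpd : Measurable fun x => p (x, x) :=
    (hpc.comp (continuous_id.prodMk continuous_id)).measurable
  have hpq : ∀ x ∈ Ω, (p (x, x)).HolderConjugate (q x) := fun x hx =>
    Real.holderConjugate_iff.mpr ⟨hpinf.trans_le (hpm _), by simpa only [one_div] using hq x hx⟩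
  have hΩ : volume Ω ≠ ⊤ := hΩbdd.measure_lt_top.ne
  rw [one_div] at hγ
  obtain ⟨la, hla, ha⟩ := hafin
  obtain ⟨lb, hlb, hb⟩ := hbfin
  obtain ⟨c₁, hc₁⟩ := exists_le_setIntegral_Ioo_sub_setIntegral_mul hΩopen.measurableSet hΩ
    hpinf hpm hpM hpd hC.le hembed hm hγ hM₁low hM₁int hpq hla ha
  obtain ⟨c₂, hc₂⟩ := exists_le_setIntegral_Ioo_sub_setIntegral_mul hΩopen.measurableSet hΩ
    hpinf hpm hpM hpd hC.le hembed hm hγ hM₂low hM₂int hpq hlb hb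
  obtain ⟨CH, hCH⟩ := hHbdd
  refine ⟨c₁ + c₂ - CH * volume.real Ω, fun u v hu hv => ?_⟩
  have hH : ∫ x in Ω, H (u x) (v x) ≤ CH * volume.real Ω :=
    (Real.le_norm_self _).trans
      (norm_setIntegral_le_of_norm_le_const hΩ.lt_top fun x _ => hCH (u x) (v x))
  unfold energy
  linarith [hc₁ u hu, hc₂ v hv]

theorem energy_bddBelow (N : ℕ) (hN : 1 ≤ N)
    (Ω : Set (EuclideanSpace ℝ (Fin N))) (hΩopen : IsOpen Ω)
    (hΩbdd : Bornology.IsBounded Ω)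
    (p s : EuclideanSpace ℝ (Fin N) × EuclideanSpace ℝ (Fin N) → ℝ)
    (hpc : Continuous p) (hsc : Continuous s)
    (hpsymm : ∀ x y, p (x, y) = p (y, x)) (hssymm : ∀ x y, s (x, y) = s (y, x))
    (hpinf : 1 < ⨅ z, p z) (hpbdd : BddAbove (Set.range p))
    (hsinf : 0 < ⨅ z, s z) (hsbdd : BddAbove (Set.range s))
    (hssup : ⨆ z, s z < 1)
    (m γ : ℝ) (hm : 0 < m) (hγ : 1 / (⨅ z, p z) < γ)
    (M₁ M₂ : ℝ → ℝ)
    (hM₁c : ContinuousOn M₁ (Set.Ioi 0)) (hM₂c : ContinuousOn M₂ (Set.Ioi 0))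
    (hM₁pos : ∀ t : ℝ, 0 < t → 0 < M₁ t) (hM₂pos : ∀ t : ℝ, 0 < t → 0 < M₂ t)
    (hM₁low : ∀ t : ℝ, 0 < t → m * t ^ (γ - 1) ≤ M₁ t)
    (hM₂low : ∀ t : ℝ, 0 < t → m * t ^ (γ - 1) ≤ M₂ t)
    (hM₁int : ∀ t : ℝ, 0 < t → IntegrableOn M₁ (Set.Ioo 0 t) volume)
    (hM₂int : ∀ t : ℝ, 0 < t → IntegrableOn M₂ (Set.Ioo 0 t) volume)
    (H : ℝ → ℝ → ℝ) (hHc : Continuous fun z : ℝ × ℝ => H z.1 z.2)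
    (hHbdd : ∃ CH : ℝ, ∀ x y : ℝ, |H x y| ≤ CH)
    (q : EuclideanSpace ℝ (Fin N) → ℝ)
    (hq : ∀ x ∈ Ω, 1 / p (x, x) + 1 / q x = 1)
    (a b : EuclideanSpace ℝ (Fin N) → ℝ) (ha : Measurable a) (hb : Measurable b)
    (hafin : ∃ lam > (0 : ℝ), ∫⁻ x in Ω, ENNReal.ofReal (|a x / lam| ^ q x) ≤ 1)
    (hbfin : ∃ lam > (0 : ℝ), ∫⁻ x in Ω, ENNReal.ofReal (|b x / lam| ^ q x) ≤ 1)
    (C : ℝ) (hC : 0 < C)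
    (hembed : ∀ u, memX0 N p s Ω u →
      luxNorm Ω (fun x => p (x, x)) u ≤ C * fracNorm N p s u) :
    ∃ c : ℝ, ∀ u v : EuclideanSpace ℝ (Fin N) → ℝ,
      memX0 N p s Ω u → memX0 N p s Ω v →
      c ≤ energy N p s Ω M₁ M₂ H a b u v :=
  energy_bddBelow_general N Ω hΩopen hΩbdd p s hpc hpinf hpbdd m γ hm hγ M₁ M₂ hM₁low hM₂low hM₁int
    hM₂int H hHbdd q hq a b hafin hbfin C hC hembed
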